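/- For any first-order differential operator L, the exponential generating series of its composition powers satisfies Σ_{m≥0} L^m z^m/m! = exp^•( Σ_{m≥1} (L^{m−1} ∘ L) z^m/m! ), where exp^• is the exponential series with respect to the black multiplication, i.e., Σ_{k≥0} (1/k!)(Σ_{m≥1} (L^{m−1}∘L) z^m/m!)^{•k}, as formal power series in z with coefficients in Diff_n. -/

import Mathlib

open Finsupp

/-- The space of linear differential operators in `n` variables (with polynomial
coefficients over `ℂ`): a formal finite sum `Σ_α u_α ∂^α`. -/
abbrev Diff (n : ℕ) := (Fin n →₀ ℕ) →₀ MvPolynomial (Fin n) ℂ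

/-- The operator `∂^α = ∂₁^{α₁} ⋯ ∂ₙ^{αₙ}` acting on coefficient functions. -/
noncomputable def Dop {n : ℕ} (α : Fin n →₀ ℕ) :
    Module.End ℂ (MvPolynomial (Fin n) ℂ) :=
  (List.ofFn fun i : Fin n => ((MvPolynomial.pderiv i).toLinearMap) ^ (α i)).prod

/-- White multiplication: `(u ∂^α) ∘ (v ∂^β) = u ∂^α(v) ∂^β`, extended bilinearly. -/
noncomputable def white {n : ℕ} (X Y : Diff n) : Diff n :=
  X.sum fun α u => Y.sum fun β v => Finsupp.single β (u * Dop α v)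

/-- Black multiplication: `(u ∂^α) • (v ∂^β) = u v ∂^{α+β}`, extended bilinearly. -/
noncomputable def black {n : ℕ} (X Y : Diff n) : Diff n :=
  X.sum fun α u => Y.sum fun β v => Finsupp.single (α + β) (u * v)

/-- Composition of differential operators:
`(u ∂^α) ⋄ (v ∂^β) = Σ_{γ ≤ α} binom(α,γ) u ∂^γ(v) ∂^{α+β-γ}`, extended bilinearly. -/
noncomputable def diam {n : ℕ} (X Y : Diff n) : Diff n :=
  X.sum fun α u => Y.sum fun β v =>
    ∑ γ ∈ Finset.Iic α,
      Finsupp.single (α + β - γ) (((∏ i, ((α i).choose (γ i)) : ℕ) : ℂ) • (u * Dop γ v))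

/-- A differential operator is of first order (a vector field) if it has the
form `Σ_i u_i ∂_i`, i.e. every multi-index in its support has total degree 1. -/
def IsVect {n : ℕ} (X : Diff n) : Prop :=
  ∀ α ∈ X.support, (α.sum fun _ k => k) = 1

/-- The identity differential operator `1·∂^0`. -/
noncomputable def unitD {n : ℕ} : Diff n := Finsupp.single 0 1

/-- Composition (`⋄`-)power `L^m = L ⋄ ⋯ ⋄ L`. -/
noncomputable def dpow {n : ℕ} (L : Diff n) : ℕ → Diff n
  | 0 => unitD
  | m + 1 => diam L (dpow L m)

/-- Black power `X^{•k} = X • ⋯ • X`. -/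
noncomputable def bpow {n : ℕ} (X : Diff n) : ℕ → Diff n
  | 0 => unitD
  | k + 1 => black X (bpow X k)

/-- Black-multiplication convolution of two formal power series in `z`
with coefficients in `Diff n`. -/
noncomputable def bconv {n : ℕ} (F G : ℕ → Diff n) : ℕ → Diff n :=
  fun m => ∑ p ∈ Finset.HasAntidiagonal.antidiagonal m, black (F p.1) (G p.2)

/-- Black power of a series: `F^{•k}`. -/
noncomputable def bpowS {n : ℕ} (F : ℕ → Diff n) : ℕ → ℕ → Diff n
  | 0 => fun m => if m = 0 then unitD else 0
  | k + 1 => bconv F (bpowS F k)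

/-!
Under the black product, `Diff n` is the commutative algebra `A` of polynomials in `∂₁, …, ∂ₙ`
over `MvPolynomial (Fin n) ℂ`. For a vector field `L`, composition splits as
`L ⋄ X = L ∘ X + L • X`, the map `δ = (L ∘ ·)` is a derivation of `A`, and
`L ∘ (X ∘ Y) = (L ⋄ X) ∘ Y`. Hence `p_m = L^m` and `w_a = L^a ∘ L` satisfy
`p_{m+1} = δ p_m + L • p_m` and `w_{a+1} = δ w_a`, and a Leibniz-type induction gives
`p_{m+1} = Σ_{a+b=m} C(m,a) w_a • p_b`. In terms of `G = Σ L^m z^m/m!` and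
`F = Σ_{m≥1} (L^{m-1} ∘ L) z^m/m!` this says `G' = F' • G`. The series `exp^•(F)` solves the same
linear equation with the same constant term `1`, so it equals `G`.
-/

open scoped Nat

namespace MvPolynomial

variable {R σ : Type*} [CommRing R]

theorem pderiv_comm (i j : σ) (f : MvPolynomial σ R) :
    pderiv i (pderiv j f) = pderiv j (pderiv i f) := by
  suffices h : ⁅pderiv i, pderiv j⁆ = (0 : Derivation R (MvPolynomial σ R) (MvPolynomial σ R)) by
    rw [← sub_eq_zero, ← Derivation.commutator_apply, h, Derivation.zero_apply]
  refine derivation_ext fun k => ?_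
  classical
  simp [Derivation.commutator_apply, pderiv_X, Pi.single_apply, apply_ite]

end MvPolynomial

section Dop

open MvPolynomial
open scoped IsMulCommutative

variable {n : ℕ}

-- The `∂ᵢ` commute, so `Dop α` can be computed in the commutative submonoid they generate.
noncomputable abbrev pderivs (n : ℕ) : Submonoid (Module.End ℂ (MvPolynomial (Fin n) ℂ)) :=
  Submonoid.closure (Set.range fun i => (pderiv i).toLinearMap)

instance : IsMulCommutative (pderivs n) :=
  Submonoid.isMulCommutative_closure _ <| by
    rintro _ ⟨i, rfl⟩ _ ⟨j, rfl⟩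
    exact LinearMap.ext (pderiv_comm i j)

noncomputable def pderivs.of (i : Fin n) : pderivs n :=
  ⟨(pderiv i).toLinearMap, Submonoid.subset_closure ⟨i, rfl⟩⟩

theorem Dop_eq_prod (α : Fin n →₀ ℕ) :
    Dop α = ((∏ i, pderivs.of i ^ α i : pderivs n) : Module.End ℂ _) := by
  rw [Dop, ← List.prod_ofFn, Submonoid.coe_list_prod, List.map_ofFn]
  rfl

theorem Dop_zero : Dop (0 : Fin n →₀ ℕ) = 1 := by simp [Dop_eq_prod]

theorem Dop_add (α β : Fin n →₀ ℕ) : Dop (α + β) = Dop α * Dop β := by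
  simp [Dop_eq_prod, pow_add, Finset.prod_mul_distrib]

theorem Dop_single (i : Fin n) : Dop (Finsupp.single i 1) = (pderiv i).toLinearMap := by
  simp [Dop_eq_prod, Finsupp.single_apply, pderivs.of]

end Dop

theorem Finsupp.Iic_single_one {ι : Type*} [DecidableEq ι] (i : ι) :
    Finset.Iic (single i 1 : ι →₀ ℕ) = {0, single i 1} := by
  ext γ
  simp only [Finset.mem_Iic, Finset.mem_insert, Finset.mem_singleton]
  refine ⟨fun h => ?_, by rintro (rfl | rfl) <;> simp⟩
  have hγ : γ = single i (γ i) :=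
    support_subset_singleton.1 ((support_mono h).trans support_single_subset)
  have hγi : γ i ≤ 1 := by simpa using h i
  rcases Nat.le_one_iff_eq_zero_or_eq_one.1 hγi with h0 | h1
  · exact Or.inl (by rw [hγ, h0, single_zero])
  · exact Or.inr (by rw [hγ, h1])

section Operators

open MvPolynomial Finsupp

variable {n : ℕ}

abbrev BlackAlgebra (n : ℕ) := AddMonoidAlgebra (MvPolynomial (Fin n) ℂ) (Fin n →₀ ℕ)

theorem ofCoeff_black (X Y : Diff n) :
    AddMonoidAlgebra.ofCoeff (black X Y) =
      (AddMonoidAlgebra.ofCoeff X * AddMonoidAlgebra.ofCoeff Y : BlackAlgebra n) := by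
  simp only [black, AddMonoidAlgebra.mul_def, AddMonoidAlgebra.ofCoeff_finsuppSum,
    AddMonoidAlgebra.ofCoeff_single]

theorem black_eq_coeff_mul (X Y : Diff n) :
    black X Y = (AddMonoidAlgebra.ofCoeff X * AddMonoidAlgebra.ofCoeff Y : BlackAlgebra n).coeff :=
  congr_arg AddMonoidAlgebra.coeff (ofCoeff_black X Y)

@[simp] theorem black_zero_left (Y : Diff n) : black 0 Y = 0 := by
  simp [black_eq_coeff_mul]

@[simp] theorem black_zero_right (X : Diff n) : black X 0 = 0 := by
  simp [black_eq_coeff_mul]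

theorem black_add_left (X X' Y : Diff n) : black (X + X') Y = black X Y + black X' Y := by
  simp [black_eq_coeff_mul, add_mul]

theorem black_add_right (X Y Y' : Diff n) : black X (Y + Y') = black X Y + black X Y' := by
  simp [black_eq_coeff_mul, mul_add]

theorem black_single_single (α β : Fin n →₀ ℕ) (u v : MvPolynomial (Fin n) ℂ) :
    black (single α u) (single β v) = single (α + β) (u * v) := by
  simp [black]

@[simp] theorem white_zero_left (Y : Diff n) : white 0 Y = 0 := by
  simp [white]

@[simp] theorem white_zero_right (X : Diff n) : white X 0 = 0 := by
  simp [white]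

theorem white_add_left (X X' Y : Diff n) : white (X + X') Y = white X Y + white X' Y := by
  refine sum_add_index' (by simp) fun α u u' => ?_
  simp [add_mul, single_add, sum_add]

theorem white_add_right (X Y Y' : Diff n) : white X (Y + Y') = white X Y + white X Y' := by
  rw [white, white, white, ← sum_add]
  refine sum_congr fun α _ => sum_add_index' (by simp) fun β v v' => ?_
  simp [mul_add, single_add]

theorem white_smul_right (c : ℂ) (X Y : Diff n) : white X (c • Y) = c • white X Y := by
  rw [white, white, smul_sum]
  refine sum_congr fun α _ => ?_
  rw [sum_smul_index' (by simp), smul_sum]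
  refine sum_congr fun β _ => ?_
  rw [map_smul, mul_smul_comm, smul_single]

theorem white_single_single (α β : Fin n →₀ ℕ) (u v : MvPolynomial (Fin n) ℂ) :
    white (single α u) (single β v) = single β (u * Dop α v) := by
  simp [white]

@[simp] theorem diam_zero_left (Y : Diff n) : diam 0 Y = 0 := by
  simp [diam]

@[simp] theorem diam_zero_right (X : Diff n) : diam X 0 = 0 := by
  simp [diam]

theorem diam_add_left (X X' Y : Diff n) : diam (X + X') Y = diam X Y + diam X' Y := by
  refine sum_add_index' (by simp) fun α u u' => ?_
  simp [add_mul, smul_add, single_add, sum_add, Finset.sum_add_distrib]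

theorem diam_add_right (X Y Y' : Diff n) : diam X (Y + Y') = diam X Y + diam X Y' := by
  rw [diam, diam, diam, ← sum_add]
  refine sum_congr fun α _ => sum_add_index' (by simp) fun β v v' => ?_
  simp [mul_add, smul_add, single_add, Finset.sum_add_distrib]

theorem diam_single_one_single (i : Fin n) (β : Fin n →₀ ℕ) (u v : MvPolynomial (Fin n) ℂ) :
    diam (single (single i 1) u) (single β v) =
      single β (u * pderiv i v) + single (single i 1 + β) (u * v) := by
  have h0 : (0 : Fin n →₀ ℕ) ∉ ({single i 1} : Finset _) := by simp [eq_comm]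
  simp [diam, Finsupp.Iic_single_one, Finset.sum_insert h0, Dop_zero, Dop_single, add_comm]

end Operators

section VectorField

open MvPolynomial Finsupp

variable {n : ℕ} {L : Diff n}

@[elab_as_elim]
theorem IsVect.induction_on {P : Diff n → Prop} (hL : IsVect L) (zero : P 0)
    (add : ∀ X Y, P X → P Y → P (X + Y))
    (single_one : ∀ i u, P (single (single i 1) u)) : P L := by
  rw [← L.sum_single]
  refine Finset.sum_induction _ P add zero fun α hα => ?_
  obtain ⟨i, rfl⟩ := (sum_eq_one_iff α).1 (hL α hα)
  exact single_one i _

theorem IsVect.diam_eq_white_add_black (hL : IsVect L) (X : Diff n) :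
    diam L X = white L X + black L X := by
  revert X
  refine hL.induction_on (by simp) (fun L L' h h' X => ?_) (fun i u X => ?_)
  · rw [diam_add_left, white_add_left, black_add_left, h, h']; abel
  · induction X using Finsupp.induction_linear with
    | zero => simp
    | add X X' h h' => rw [diam_add_right, white_add_right, black_add_right, h, h']; abel
    | single β v =>
      rw [diam_single_one_single, white_single_single, black_single_single, Dop_single]; rfl

theorem IsVect.white_black (hL : IsVect L) (X Y : Diff n) :
    white L (black X Y) = black (white L X) Y + black X (white L Y) := by
  revert X Y
  refine hL.induction_on (by simp) (fun L L' h h' X Y => ?_) (fun i u X Y => ?_)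
  · rw [white_add_left, white_add_left, white_add_left, h, h', black_add_left, black_add_right]
    abel
  · induction X using Finsupp.induction_linear with
    | zero => simp
    | add X X' h h' =>
      rw [black_add_left, white_add_right, white_add_right, h, h', black_add_left, black_add_left]
      abel
    | single β v =>
      induction Y using Finsupp.induction_linear with
      | zero => simp
      | add Y Y' h h' =>
        rw [black_add_right, white_add_right, white_add_right, h, h', black_add_right,
          black_add_right]
        abel
      | single ζ w =>
        simp only [black_single_single, white_single_single, Dop_single, ← single_add]
        congr 1
        simp only [Derivation.coeFn_coe, Derivation.leibniz, smul_eq_mul]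
        ring

theorem IsVect.white_white (hL : IsVect L) (X Y : Diff n) :
    white L (white X Y) = white (diam L X) Y := by
  rw [hL.diam_eq_white_add_black, white_add_left]
  revert X Y
  refine hL.induction_on (by simp) (fun L L' h h' X Y => ?_) (fun i u X Y => ?_)
  · simp only [white_add_left, black_add_left, h, h']
    abel
  · induction X using Finsupp.induction_linear with
    | zero => simp
    | add X X' h h' =>
      simp only [white_add_left, white_add_right, black_add_right, h, h']
      abel
    | single β v =>
      induction Y using Finsupp.induction_linear with
      | zero => simp
      | add Y Y' h h' =>
        simp only [white_add_right, h, h']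
        abel
      | single ζ w =>
        simp only [black_single_single, white_single_single, Dop_add, Dop_single, ← single_add]
        congr 1
        simp only [Module.End.mul_apply, Derivation.coeFn_coe, Derivation.leibniz, smul_eq_mul]
        ring

theorem white_unitD_left (X : Diff n) : white unitD X = X := by
  rw [white, unitD, sum_single_index (by simp), Dop_zero]
  simp

end VectorField

-- Here `p m = (δ + ℓ)^m 1` and `w a = δ^a ℓ`: a Leibniz rule for the operator `δ + ℓ`.
open Finset in
theorem Derivation.eq_sum_choose_of_recurrence {S R : Type*} [CommSemiring S] [CommRing R]
    [Algebra S R] (δ : Derivation S R R) {ℓ : R} {p w : ℕ → R} (hp₀ : p 0 = 1)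
    (hp : ∀ m, p (m + 1) = δ (p m) + ℓ * p m) (hw₀ : w 0 = ℓ) (hw : ∀ a, w (a + 1) = δ (w a))
    (m : ℕ) :
    p (m + 1) = ∑ ij ∈ antidiagonal m, m.choose ij.1 • (w ij.1 * p ij.2) := by
  induction m with
  | zero => simp [hp, hp₀, hw₀]
  | succ m ih =>
    rw [sum_antidiagonal_choose_succ_nsmul (fun i j => w i * p j), ← sum_add_distrib,
      hp, ih, map_sum, Finset.mul_sum, ← sum_add_distrib]
    refine sum_congr rfl fun ij hij => ?_
    rw [Nat.choose_symm_of_eq_add (HasAntidiagonal.mem_antidiagonal.1 hij).symm, map_nsmul,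
      mul_smul_comm, ← smul_add, ← smul_add, Derivation.leibniz, hp, hw, smul_eq_mul, smul_eq_mul]
    ring

theorem inv_factorial_succ_mul_succ (K : Type*) [Field K] [CharZero K] (k : ℕ) :
    ((k + 1)! : K)⁻¹ * (k + 1 : ℕ) = (k ! : K)⁻¹ := by
  rw [Nat.factorial_succ, Nat.cast_mul, mul_inv, mul_comm, ← mul_assoc,
    mul_inv_cancel₀ (Nat.cast_ne_zero.2 k.succ_ne_zero), one_mul]

namespace PowerSeries

open Finset

section Egf

variable (K : Type*) {R : Type*} [Field K] [CommRing R] [Algebra K R]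

noncomputable def egf (p : ℕ → R) : R⟦X⟧ := mk fun m => (m ! : K)⁻¹ • p m

@[simp] theorem coeff_egf (p : ℕ → R) (m : ℕ) : coeff m (egf K p) = (m ! : K)⁻¹ • p m :=
  coeff_mk _ _

theorem derivative_egf [CharZero K] (p : ℕ → R) :
    d⁄dX R (egf K p) = egf K (fun m => p (m + 1)) := by
  ext m
  rw [coeff_derivative, coeff_egf, coeff_egf, mul_comm, ← Nat.cast_succ, ← nsmul_eq_mul,
    ← Nat.cast_smul_eq_nsmul K, smul_smul, mul_comm, inv_factorial_succ_mul_succ]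

theorem egf_mul_egf [CharZero K] (p q : ℕ → R) :
    egf K p * egf K q =
      egf K (fun m => ∑ ij ∈ antidiagonal m, m.choose ij.1 • (p ij.1 * q ij.2)) := by
  ext m
  simp only [coeff_mul, coeff_egf, Finset.smul_sum]
  refine sum_congr rfl fun ij hij => ?_
  obtain rfl := HasAntidiagonal.mem_antidiagonal.1 hij
  rw [← Nat.cast_smul_eq_nsmul K, smul_smul, Nat.cast_add_choose, smul_mul_smul_comm]
  have := (Nat.cast_ne_zero (R := K)).2 (ij.1 + ij.2).factorial_ne_zero
  congr 1
  field_simp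

theorem derivative_egf_eq_mul_egf [CharZero K] (δ : Derivation K R R) {ℓ : R} {p w : ℕ → R}
    (hp₀ : p 0 = 1) (hp : ∀ m, p (m + 1) = δ (p m) + ℓ * p m) (hw₀ : w 0 = ℓ)
    (hw : ∀ a, w (a + 1) = δ (w a)) :
    d⁄dX R (egf K p) = egf K w * egf K p := by
  rw [derivative_egf, egf_mul_egf]
  exact congr_arg _ (funext (δ.eq_sum_choose_of_recurrence hp₀ hp hw₀ hw))

end Egf

theorem coeff_pow_eq_zero_of_lt {R : Type*} [CommSemiring R] {f : R⟦X⟧}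
    (hf : constantCoeff f = 0) {m k : ℕ} (h : m < k) : coeff m (f ^ k) = 0 :=
  X_pow_dvd_iff.1 (pow_dvd_pow_of_dvd (X_dvd_iff.2 hf) k) m h

section Exp

variable (K : Type*) {R : Type*} [Field K] [CommRing R] [Algebra K R]

noncomputable def expComp (f : R⟦X⟧) : R⟦X⟧ :=
  mk fun m => ∑ k ∈ range (m + 1), (k ! : K)⁻¹ • coeff m (f ^ k)

variable {K} {f : R⟦X⟧}

theorem coeff_expComp_of_lt (hf : constantCoeff f = 0) {m N : ℕ} (h : m < N) :
    coeff m (expComp K f) = coeff m (∑ k ∈ range N, (k ! : K)⁻¹ • f ^ k) := by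
  rw [expComp, coeff_mk, map_sum]
  simp only [coeff_smul]
  refine sum_subset (range_subset_range.2 h) fun k _ hk => ?_
  rw [coeff_pow_eq_zero_of_lt hf (by simpa using hk), smul_zero]

theorem derivative_expComp [CharZero K] (hf : constantCoeff f = 0) :
    d⁄dX R (expComp K f) = d⁄dX R f * expComp K f := by
  set S : ℕ → R⟦X⟧ := fun N => ∑ k ∈ range N, (k ! : K)⁻¹ • f ^ k
  have hS : ∀ N, d⁄dX R (S (N + 1)) = d⁄dX R f * S N := by
    intro N
    simp only [S, sum_range_succ', map_add, map_sum, pow_zero, Derivation.map_smul_of_tower,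
      Derivation.map_one_eq_zero, smul_zero, add_zero, Finset.mul_sum]
    refine sum_congr rfl fun k _ => ?_
    rw [Derivation.leibniz_pow, Nat.add_sub_cancel, smul_eq_mul, ← Nat.cast_smul_eq_nsmul K,
      smul_smul, inv_factorial_succ_mul_succ, mul_comm, mul_smul_comm]
  ext m
  rw [coeff_derivative, coeff_expComp_of_lt hf (Nat.lt_succ_self (m + 1)), ← coeff_derivative, hS,
    coeff_mul, coeff_mul]
  refine sum_congr rfl fun ij hij => ?_
  rw [coeff_expComp_of_lt hf]
  have := HasAntidiagonal.mem_antidiagonal.1 hij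
  omega

end Exp

theorem eq_of_derivative_eq_mul {R : Type*} [CommRing R] [IsAddTorsionFree R] {h g₁ g₂ : R⟦X⟧}
    (h₁ : d⁄dX R g₁ = h * g₁) (h₂ : d⁄dX R g₂ = h * g₂)
    (h₀ : constantCoeff g₁ = constantCoeff g₂) : g₁ = g₂ := by
  ext m
  induction m using Nat.strong_induction_on with
  | _ m ih =>
    cases m with
    | zero => simpa using h₀
    | succ m =>
      have key : coeff (m + 1) g₁ * (m + 1) = coeff (m + 1) g₂ * (m + 1) := by
        rw [← coeff_derivative, ← coeff_derivative, h₁, h₂, coeff_mul, coeff_mul]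
        refine sum_congr rfl fun ij hij => ?_
        rw [ih ij.2 (by have := HasAntidiagonal.mem_antidiagonal.1 hij; omega)]
      rw [mul_comm, mul_comm _ ((m : R) + 1), ← Nat.cast_succ, ← nsmul_eq_mul,
        ← nsmul_eq_mul] at key
      exact nsmul_right_injective m.succ_ne_zero key

end PowerSeries

section Exponential

open PowerSeries
open AddMonoidAlgebra (ofCoeff ofCoeff_add ofCoeff_sum ofCoeff_coeff)

variable {n : ℕ} {L : Diff n}

noncomputable def IsVect.whiteDerivation (hL : IsVect L) :
    Derivation ℂ (BlackAlgebra n) (BlackAlgebra n) :=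
  Derivation.mk'
    { toFun := fun x => ofCoeff (white L x.coeff)
      map_add' := fun x y => by
        simp only [AddMonoidAlgebra.coeff_add, white_add_right, ofCoeff_add]
      map_smul' := fun c x => by simp only [AddMonoidAlgebra.coeff_smul, white_smul_right]; rfl }
    fun x y => by
      simp only [LinearMap.coe_mk, AddHom.coe_mk, smul_eq_mul]
      rw [← ofCoeff_coeff x, ← ofCoeff_coeff y, ← black_eq_coeff_mul, hL.white_black,
        ofCoeff_add, ofCoeff_black, ofCoeff_black]
      ring

theorem IsVect.whiteDerivation_ofCoeff (hL : IsVect L) (X : Diff n) :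
    hL.whiteDerivation (ofCoeff X) = ofCoeff (white L X) := rfl

theorem ofCoeff_dpow_succ (hL : IsVect L) (m : ℕ) :
    (ofCoeff (dpow L (m + 1)) : BlackAlgebra n) =
      hL.whiteDerivation (ofCoeff (dpow L m)) + ofCoeff L * ofCoeff (dpow L m) := by
  rw [dpow, hL.diam_eq_white_add_black, ofCoeff_add, ofCoeff_black, IsVect.whiteDerivation_ofCoeff]

theorem white_dpow_succ (hL : IsVect L) (a : ℕ) :
    white (dpow L (a + 1)) L = white L (white (dpow L a) L) := by
  rw [hL.white_white, dpow]

theorem derivative_egf_dpow (hL : IsVect L) :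
    d⁄dX (BlackAlgebra n) (egf ℂ fun m => ofCoeff (dpow L m)) =
      (egf ℂ fun a => ofCoeff (white (dpow L a) L)) * egf ℂ fun m => ofCoeff (dpow L m) :=
  derivative_egf_eq_mul_egf ℂ hL.whiteDerivation rfl (ofCoeff_dpow_succ hL)
    (by rw [dpow, white_unitD_left]) fun a => by rw [white_dpow_succ hL]; rfl

theorem ofCoeff_bpowS (f : ℕ → Diff n) (k m : ℕ) :
    (ofCoeff (bpowS f k m) : BlackAlgebra n) = coeff m ((mk fun j => ofCoeff (f j)) ^ k) := by
  induction k generalizing m with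
  | zero =>
    rw [pow_zero, coeff_one]
    dsimp only [bpowS]
    split_ifs <;> rfl
  | succ k ih =>
    simp only [bpowS, bconv, ofCoeff_sum, ofCoeff_black, ih, pow_succ', coeff_mul, coeff_mk]

theorem egf_dpow_eq_expComp (hL : IsVect L) :
    (egf ℂ fun m => ofCoeff (dpow L m)) = expComp ℂ (mk fun j => ofCoeff (if j = 0 then 0
      else ((j.factorial : ℂ)⁻¹) • white (dpow L (j - 1)) L)) := by
  set F : (BlackAlgebra n)⟦X⟧ :=
    egf ℂ fun j => if j = 0 then 0 else ofCoeff (white (dpow L (j - 1)) L)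
  have hF : (mk fun j => ofCoeff (if j = 0 then 0
      else ((j.factorial : ℂ)⁻¹) • white (dpow L (j - 1)) L)) = F := by
    refine PowerSeries.ext fun j => ?_
    rcases j with _ | j <;> simp [F]
  have hF₀ : constantCoeff F = 0 := by simp [← coeff_zero_eq_constantCoeff_apply, F]
  have hF' : d⁄dX (BlackAlgebra n) F = egf ℂ fun a => ofCoeff (white (dpow L a) L) := by
    simp [F, derivative_egf]
  rw [hF]
  exact eq_of_derivative_eq_mul ((derivative_egf_dpow hL).trans (by rw [hF']))
    (derivative_expComp hF₀) (by
      rw [← coeff_zero_eq_constantCoeff_apply, ← coeff_zero_eq_constantCoeff_apply]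
      simp [expComp]
      rfl)

end Exponential

/-- `Σ_{m≥0} L^m z^m/m! = exp^•(Σ_{m≥1} (L^{m-1}∘L) z^m/m!)`,
stated coefficientwise in `z` (terms with `k > m` vanish, so the exponential sum
truncates at `k = m`). -/
theorem exp_black_formula {n : ℕ} (L : Diff n) (hL : IsVect L) (m : ℕ) :
    ((m.factorial : ℂ)⁻¹) • dpow L m =
      ∑ k ∈ Finset.range (m + 1),
        ((k.factorial : ℂ)⁻¹) •
          bpowS (fun j => if j = 0 then 0
            else ((j.factorial : ℂ)⁻¹) • white (dpow L (j - 1)) L) k m := by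
  apply AddMonoidAlgebra.ofCoeff_injective
  simpa [PowerSeries.expComp, AddMonoidAlgebra.ofCoeff_sum, AddMonoidAlgebra.ofCoeff_smul,
    ofCoeff_bpowS] using congr_arg (PowerSeries.coeff m) (egf_dpow_eq_expComp hL)
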